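/- Let k : X × X → ℝ be a symmetric positive semidefinite kernel and let μ, ν be probability measures on X with bounded kernel. Then D²(μ,ν) := E_{X,X'∼μ}[k(X,X')] + E_{Y,Y'∼ν}[k(Y,Y')] − 2 E_{X∼μ,Y∼ν}[k(X,Y)] is nonnegative, where all pairs are independent. -/
import Mathlib


open MeasureTheory

private lemma integrable_of_abs_le' {α : Type*} [MeasurableSpace α] {P : Measure α}
    [IsFiniteMeasure P] {f : α → ℝ} (hf : Measurable f) {K : ℝ} (h : ∀ x, |f x| ≤ K) :
    Integrable f P :=
  ⟨hf.aestronglyMeasurable, HasFiniteIntegral.of_bounded (C := K)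
    (Filter.Eventually.of_forall (fun x => by simpa [Real.norm_eq_abs] using h x))⟩

private lemma pi_map_eval' {X : Type*} [MeasurableSpace X] {n : ℕ}
    (m : Fin n → Measure X) [∀ i, IsProbabilityMeasure (m i)] (i : Fin n) :
    (Measure.pi m).map (fun ω => ω i) = m i := by
  classical
  ext s hs
  rw [Measure.map_apply (measurable_pi_apply i) hs]
  have hpre : (fun ω : Fin n → X => ω i) ⁻¹' s
      = Set.pi Set.univ (fun l => if l = i then s else Set.univ) := by
    ext ω
    simp only [Set.mem_preimage, Set.mem_pi, Set.mem_univ, forall_true_left]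
    constructor
    · intro h1 l
      by_cases hl : l = i
      · subst hl; simp [h1]
      · simp [hl]
    · intro h
      have := h i
      simpa using this
  rw [hpre, Measure.pi_pi]
  rw [Finset.prod_eq_single i (fun c _ hc => by simp [hc]) (fun h => (h (Finset.mem_univ i)).elim)]
  simp

private lemma pi_map_pair' {X : Type*} [MeasurableSpace X] {n : ℕ}
    (m : Fin n → Measure X) [∀ i, IsProbabilityMeasure (m i)]
    {i j : Fin n} (hij : i ≠ j) :
    (Measure.pi m).map (fun ω => (ω i, ω j)) = (m i).prod (m j) := by
  classical
  refine (Measure.prod_eq fun s t hs ht => ?_).symm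
  rw [Measure.map_apply ((measurable_pi_apply i).prodMk (measurable_pi_apply j)) (hs.prod ht)]
  have hpre : (fun ω : Fin n → X => (ω i, ω j)) ⁻¹' (s ×ˢ t)
      = Set.pi Set.univ (fun l => if l = i then s else if l = j then t else Set.univ) := by
    ext ω
    simp only [Set.mem_preimage, Set.mem_prod, Set.mem_pi, Set.mem_univ, forall_true_left]
    constructor
    · rintro ⟨h1, h2⟩ l
      by_cases hl : l = i
      · subst hl; simp [h1]
      · by_cases hl2 : l = j
        · subst hl2; simp [hl, h2]
        · simp [hl, hl2]
    · intro h
      have h1 := h i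
      have h2 := h j
      rw [if_pos rfl] at h1
      rw [if_neg (Ne.symm hij), if_pos rfl] at h2
      exact ⟨h1, h2⟩
  rw [hpre, Measure.pi_pi]
  rw [Finset.prod_eq_mul i j hij (fun c _ hc => by simp [hc.1, hc.2])
    (fun h => (h (Finset.mem_univ i)).elim) (fun h => (h (Finset.mem_univ j)).elim)]
  simp [Ne.symm hij]

/-- For a bounded measurable symmetric positive semidefinite kernel `k` and probability
measures `μ, ν`, the squared MMD
`D²(μ,ν) = E_{μ⊗μ}[k] + E_{ν⊗ν}[k] − 2 E_{μ⊗ν}[k]` is nonnegative. -/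
theorem mmd_sq_nonneg {X : Type*} [MeasurableSpace X]
    (k : X → X → ℝ)
    (hmeas : Measurable (fun p : X × X => k p.1 p.2))
    (hbdd : ∃ K : ℝ, ∀ x y, |k x y| ≤ K)
    (hsymm : ∀ x y, k x y = k y x)
    (hpsd : ∀ (n : ℕ) (x : Fin n → X) (c : Fin n → ℝ),
      0 ≤ ∑ i, ∑ j, c i * c j * k (x i) (x j))
    (μ ν : Measure X) [IsProbabilityMeasure μ] [IsProbabilityMeasure ν] :
    0 ≤ (∫ x, ∫ x', k x x' ∂μ ∂μ) + (∫ y, ∫ y', k y y' ∂ν ∂ν)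
        - 2 * ∫ x, ∫ y, k x y ∂ν ∂μ := by
  classical
  obtain ⟨K, hK⟩ := hbdd
  set A := ∫ x, ∫ x', k x x' ∂μ ∂μ with hA
  set B := ∫ y, ∫ y', k y y' ∂ν ∂ν with hB
  set C := ∫ x, ∫ y, k x y ∂ν ∂μ with hC
  set a := ∫ x, k x x ∂μ with ha
  set b := ∫ y, k y y ∂ν with hb
  -- integrability of k on products of probability measures
  have hint : ∀ (p q : Measure X), IsProbabilityMeasure p → IsProbabilityMeasure q →
      Integrable (fun z : X × X => k z.1 z.2) (p.prod q) := by
    intro p q hp hq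
    exact integrable_of_abs_le' hmeas (fun z => hK z.1 z.2)
  -- I p q := ∫∫ k with outer p, inner q
  have hIpq : ∀ (p q : Measure X), IsProbabilityMeasure p → IsProbabilityMeasure q →
      ∫ z, k z.1 z.2 ∂(p.prod q) = ∫ x, ∫ y, k x y ∂q ∂p := by
    intro p q hp hq
    exact integral_prod _ (hint p q hp hq)
  -- The cross integral in the other order is the same
  have hC' : (∫ x, ∫ y, k x y ∂μ ∂ν) = C := by
    have h1 : (∫ x, ∫ y, k x y ∂μ ∂ν) = ∫ x, ∫ y, k y x ∂μ ∂ν := by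
      simp_rw [fun x y => hsymm x y]
    rw [h1]
    have h2 : Integrable (Function.uncurry fun x y => k y x) (ν.prod μ) := by
      refine integrable_of_abs_le' ?_ (K := K) (fun z => hK z.2 z.1)
      exact hmeas.comp (measurable_snd.prodMk measurable_fst)
    have := integral_integral_swap h2
    -- this : ∫ x ∂ν, ∫ y ∂μ, k y x = ∫ y ∂μ, ∫ x ∂ν, k y x
    rw [this, hC]
  -- Key inequality for each n
  have key : ∀ N : ℕ, 0 < N →
      ((A - a) + (B - b)) / (N : ℝ) ≤ A + B - 2 * C := by
    intro n hn
    -- the sampling measures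
    set m : Fin (n + n) → Measure X := fun i => if (i : ℕ) < n then μ else ν with hm
    have hmP : ∀ i, IsProbabilityMeasure (m i) := by
      intro i; rw [hm]; dsimp only; split <;> infer_instance
    set P : Measure (Fin (n + n) → X) := Measure.pi m with hP
    have : IsProbabilityMeasure P := by rw [hP]; infer_instance
    set c : Fin (n + n) → ℝ := fun i => if (i : ℕ) < n then 1 else -1 with hc'
    -- values of m, c on the two halves
    have hmc : ∀ i : Fin n, m (Fin.castAdd n i) = μ := by
      intro i; rw [hm]; simp [i.isLt]
    have hmn : ∀ i : Fin n, m (Fin.natAdd n i) = ν := by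
      intro i; rw [hm]; simp [Nat.not_lt.2 (Nat.le_add_right n i)]
    have hcc : ∀ i : Fin n, c (Fin.castAdd n i) = 1 := by
      intro i; rw [hc']; simp [i.isLt]
    have hcn : ∀ i : Fin n, c (Fin.natAdd n i) = -1 := by
      intro i; rw [hc']; simp [Nat.not_lt.2 (Nat.le_add_right n i)]
    have hne : ∀ (i j : Fin n), Fin.castAdd n i ≠ Fin.natAdd n j := by
      intro i j h
      have h2 := congrArg Fin.val h
      simp at h2
      have := i.isLt
      omega
    -- the coordinate-pair integrals
    set J : Fin (n + n) → Fin (n + n) → ℝ := fun i j => ∫ ω, k (ω i) (ω j) ∂P with hJ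
    have hJdiag : ∀ i, J i i = ∫ x, k x x ∂(m i) := by
      intro i
      rw [hJ]
      dsimp only
      have hmm : Measurable fun x : X => k x x :=
        hmeas.comp (measurable_id.prodMk measurable_id)
      rw [← pi_map_eval' m i, integral_map (measurable_pi_apply i).aemeasurable
        hmm.aestronglyMeasurable]
    have hJpair : ∀ i j, i ≠ j → J i j = ∫ x, ∫ y, k x y ∂(m j) ∂(m i) := by
      intro i j hij
      rw [hJ]
      dsimp only
      have hpm : Measurable fun ω : Fin (n + n) → X => (ω i, ω j) :=
        (measurable_pi_apply i).prodMk (measurable_pi_apply j)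
      rw [← hIpq (m i) (m j) (hmP i) (hmP j), ← pi_map_pair' m hij,
        integral_map hpm.aemeasurable hmeas.aestronglyMeasurable]
    -- integrability of each summand
    have hmeasij : ∀ i j : Fin (n + n),
        Measurable fun ω : Fin (n + n) → X => k (ω i) (ω j) := by
      intro i j
      have h1 : Measurable fun ω : Fin (n + n) → X => (ω i, ω j) :=
        (measurable_pi_apply i).prodMk (measurable_pi_apply j)
      exact hmeas.comp h1
    have hintij : ∀ i j : Fin (n + n),
        Integrable (fun ω : Fin (n + n) → X => c i * c j * k (ω i) (ω j)) P := by
      intro i j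
      exact (integrable_of_abs_le' (hmeasij i j) (fun ω => hK _ _)).const_mul _
    -- the expectation of the PSD quadratic form
    have hS : (0 : ℝ) ≤ ∑ i, ∑ j, c i * c j * J i j := by
      have h0 : (0 : ℝ) ≤ ∫ ω, (∑ i, ∑ j, c i * c j * k (ω i) (ω j)) ∂P :=
        integral_nonneg fun ω => hpsd (n + n) ω c
      have heq : ∫ ω, (∑ i, ∑ j, c i * c j * k (ω i) (ω j)) ∂P
          = ∑ i, ∑ j, c i * c j * J i j := by
        rw [integral_finset_sum _ (fun i _ => integrable_finset_sum _ (fun j _ => hintij i j))]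
        refine Finset.sum_congr rfl fun i _ => ?_
        rw [integral_finset_sum _ (fun j _ => hintij i j)]
        refine Finset.sum_congr rfl fun j _ => ?_
        exact integral_const_mul _ _
      rw [heq] at h0
      exact h0
    have hcinj : ∀ i j : Fin n, Fin.castAdd n i = Fin.castAdd n j → i = j := by
      intro i j h
      have h2 := congrArg Fin.val h
      simp at h2
      exact Fin.ext h2
    have hninj : ∀ i j : Fin n, Fin.natAdd n i = Fin.natAdd n j → i = j := by
      intro i j h
      have h2 := congrArg Fin.val h
      simp at h2
      exact Fin.ext h2
    -- values of J on the four blocks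
    have hJcc : ∀ i j : Fin n, J (Fin.castAdd n i) (Fin.castAdd n j)
        = if i = j then a else A := by
      intro i j
      by_cases h : i = j
      · subst h; rw [if_pos rfl, hJdiag, hmc]
      · rw [if_neg h, hJpair _ _ (fun hh => h (hcinj _ _ hh)), hmc, hmc, hA]
    have hJnn : ∀ i j : Fin n, J (Fin.natAdd n i) (Fin.natAdd n j)
        = if i = j then b else B := by
      intro i j
      by_cases h : i = j
      · subst h; rw [if_pos rfl, hJdiag, hmn]
      · rw [if_neg h, hJpair _ _ (fun hh => h (hninj _ _ hh)), hmn, hmn, hB]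
    have hJcn : ∀ i j : Fin n, J (Fin.castAdd n i) (Fin.natAdd n j) = C := by
      intro i j
      rw [hJpair _ _ (hne i j), hmc, hmn, hC]
    have hJnc : ∀ i j : Fin n, J (Fin.natAdd n i) (Fin.castAdd n j) = C := by
      intro i j
      rw [hJpair _ _ (fun hh => hne j i hh.symm), hmn, hmc, hC']
    -- compute the sum
    have hsum : ∑ i, ∑ j, c i * c j * J i j
        = (n : ℝ) * ((n : ℝ) * A + (a - A)) + (n : ℝ) * ((n : ℝ) * B + (b - B))
          - 2 * ((n : ℝ) * (n : ℝ) * C) := by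
      rw [Fin.sum_univ_add (f := fun i => ∑ j, c i * c j * J i j)]
      have hinner : ∀ i : Fin (n + n), ∑ j, c i * c j * J i j
          = (∑ j : Fin n, c i * c (Fin.castAdd n j) * J i (Fin.castAdd n j))
            + ∑ j : Fin n, c i * c (Fin.natAdd n j) * J i (Fin.natAdd n j) :=
        fun i => Fin.sum_univ_add (f := fun j => c i * c j * J i j)
      simp_rw [hinner]
      rw [Finset.sum_add_distrib, Finset.sum_add_distrib]
      have e1 : ∑ i : Fin n, ∑ j : Fin n,
          c (Fin.castAdd n i) * c (Fin.castAdd n j) * J (Fin.castAdd n i) (Fin.castAdd n j)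
          = (n : ℝ) * ((n : ℝ) * A + (a - A)) := by
        simp_rw [hcc, hJcc, one_mul]
        have : ∀ i : Fin n, ∑ j : Fin n, (if i = j then a else A)
            = (n : ℝ) * A + (a - A) := by
          intro i
          have : ∀ j : Fin n, (if i = j then a else A)
              = A + (if i = j then (a - A) else 0) := by
            intro j; by_cases h : i = j <;> simp [h]
          simp_rw [this]
          rw [Finset.sum_add_distrib, Finset.sum_const, Finset.sum_ite_eq]
          simp [mul_comm]
        simp_rw [this]
        rw [Finset.sum_const]
        simp [mul_comm, mul_add]
      have e4 : ∑ i : Fin n, ∑ j : Fin n,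
          c (Fin.natAdd n i) * c (Fin.natAdd n j) * J (Fin.natAdd n i) (Fin.natAdd n j)
          = (n : ℝ) * ((n : ℝ) * B + (b - B)) := by
        simp_rw [hcn, hJnn]
        have : ∀ i : Fin n, ∑ j : Fin n, (-1 : ℝ) * -1 * (if i = j then b else B)
            = (n : ℝ) * B + (b - B) := by
          intro i
          have : ∀ j : Fin n, (-1 : ℝ) * -1 * (if i = j then b else B)
              = B + (if i = j then (b - B) else 0) := by
            intro j; by_cases h : i = j <;> simp [h]
          simp_rw [this]
          rw [Finset.sum_add_distrib, Finset.sum_const, Finset.sum_ite_eq]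
          simp [mul_comm]
        simp_rw [this]
        rw [Finset.sum_const]
        simp [mul_comm, mul_add]
      have e2 : ∑ i : Fin n, ∑ j : Fin n,
          c (Fin.castAdd n i) * c (Fin.natAdd n j) * J (Fin.castAdd n i) (Fin.natAdd n j)
          = -((n : ℝ) * (n : ℝ) * C) := by
        simp_rw [hcc, hcn, hJcn]
        simp [Finset.sum_const, mul_comm, mul_assoc]
      have e3 : ∑ i : Fin n, ∑ j : Fin n,
          c (Fin.natAdd n i) * c (Fin.castAdd n j) * J (Fin.natAdd n i) (Fin.castAdd n j)
          = -((n : ℝ) * (n : ℝ) * C) := by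
        simp_rw [hcn, hcc, hJnc]
        simp [Finset.sum_const, mul_comm, mul_assoc]
      rw [e1, e2, e3, e4]
      ring
    rw [hsum] at hS
    -- derive the inequality
    have hn' : (0 : ℝ) < n := by exact_mod_cast hn
    rw [div_le_iff₀ hn']
    nlinarith [sq_nonneg ((n : ℝ))]
  -- take the limit n → ∞
  have hlim := tendsto_const_div_atTop_nhds_zero_nat ((A - a) + (B - b))
  have hfin : (0 : ℝ) ≤ A + B - 2 * C := by
    refine le_of_tendsto hlim ?_
    filter_upwards [Filter.eventually_ge_atTop 1] with N hN
    exact key N hN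
  linarith
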